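/- arXiv:1807.08052 — 4 statements merged into one kernel-verified Lean document; each statement's English description precedes it below -/
import Mathlib

section
/- Let r ≥ 1 and let Π_1,…,Π_r be the elementary symmetric polynomials in the variables X_1,…,X_r over a commutative ring. The determinant of the r×r Jacobian matrix whose (i,j) entry is the partial derivative ∂((−1)^i·Π_i)/∂X_j (1 ≤ i,j ≤ r) equals (−1)^r·∏_{1≤i<j≤r}(X_j − X_i). -/
/-!
Since `∂Π_{i+1}/∂X_j = e_i(X̂_j)`, the elementary symmetric polynomial of the variables
other than `X_j`, and `∏_{k ≠ j} (1 - X_k t) = ∏_k (1 - X_k t) · ∑_l X_j^l t^l`, comparing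
coefficients of `t^i` gives `(-1)^i e_i(X̂_j) = ∑_{l ≤ i} (-1)^(i-l) Π_{i-l} X_j^l`. Hence the
Jacobian matrix is `-(L · Vᵀ)`, where `L` is lower unitriangular with entries independent of
`j` and `V` is the Vandermonde matrix of `X_1, …, X_r`, so its determinant is `(-1)^r det V`.
-/

open Finset MvPolynomial

namespace Multiset

theorem esymm_cons_succ {A : Type*} [CommSemiring A] (a : A) (s : Multiset A) (k : ℕ) :
    (a ::ₘ s).esymm (k + 1) = s.esymm (k + 1) + a * s.esymm k := by
  simp [esymm, powersetCard_cons, map_map, sum_map_mul_left]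

theorem neg_one_pow_mul_esymm_eq_sum {A : Type*} [CommRing A] (x : A) (s : Multiset A) (i : ℕ) :
    (-1) ^ i * s.esymm i =
      ∑ l ∈ Finset.range (i + 1), (-1) ^ (i - l) * (x ::ₘ s).esymm (i - l) * x ^ l := by
  induction i with
  | zero => simp [esymm]
  | succ i ih =>
    rw [sum_range_succ']
    simp only [Nat.add_sub_add_right, Nat.sub_zero, pow_succ x, ← mul_assoc, ← sum_mul, ← ih,
      esymm_cons_succ]
    ring

end Multiset

namespace Derivation

variable {R A M : Type*} [CommSemiring R] [CommSemiring A] [Algebra R A] [AddCommMonoid M]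
  [Module A M] [Module R M] (D : Derivation R A M)

theorem map_multiset_prod_eq_zero {s : Multiset A} (h : ∀ a ∈ s, D a = 0) : D s.prod = 0 := by
  induction s using Multiset.induction_on with
  | empty => simp
  | cons a s ih =>
    simp only [Multiset.mem_cons, forall_eq_or_imp] at h
    simp [leibniz, h.1, ih h.2]

theorem map_esymm_eq_zero {s : Multiset A} (h : ∀ a ∈ s, D a = 0) (k : ℕ) :
    D (s.esymm k) = 0 := by
  rw [Multiset.esymm, map_multiset_sum, Multiset.map_map]
  refine Multiset.sum_eq_zero fun _ hmem => ?_
  obtain ⟨t, ht, rfl⟩ := Multiset.mem_map.1 hmem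
  exact D.map_multiset_prod_eq_zero fun a ha =>
    h a (Multiset.mem_of_le (Multiset.mem_powersetCard.1 ht).1 ha)

end Derivation

theorem Fin.sum_univ_ite_le_eq_sum_range {M : Type*} [AddCommMonoid M] {r : ℕ} (i : Fin r)
    (f : ℕ → M) :
    ∑ l : Fin r, (if l ≤ i then f l else 0) = ∑ l ∈ range (i + 1), f l := by
  simp_rw [Fin.le_iff_val_le_val]
  rw [Fin.sum_univ_eq_sum_range (fun l => if l ≤ (i : ℕ) then f l else 0), ← sum_filter]
  congr 1
  ext l
  simp only [mem_filter, mem_range]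
  omega

theorem Fin.prod_univ_prod_Ioi_eq_prod_filter_lt {M : Type*} [CommMonoid M] {r : ℕ}
    (f : Fin r → Fin r → M) :
    ∏ i, ∏ j ∈ Ioi i, f i j =
      ∏ p ∈ univ.filter (fun p : Fin r × Fin r => p.1 < p.2), f p.1 p.2 := by
  simp_rw [← filter_lt_eq_Ioi, prod_filter, ← Fintype.prod_prod_type']

namespace MvPolynomial

section Fintype

variable {σ R : Type*} [Fintype σ] [DecidableEq σ]

theorem univ_val_map_X_eq_cons [CommSemiring R] (j : σ) :
    (univ.val.map X : Multiset (MvPolynomial σ R)) = X j ::ₘ (univ.erase j).val.map X := by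
  rw [erase_val, ← Multiset.map_cons, Multiset.cons_erase (mem_univ j)]

theorem pderiv_esymm_succ [CommSemiring R] (j : σ) (k : ℕ) :
    pderiv j (esymm σ R (k + 1)) = ((univ.erase j).val.map X).esymm k := by
  have hker : ∀ p ∈ (univ.erase j).val.map (X : σ → MvPolynomial σ R), pderiv j p = 0 := by
    simp only [Multiset.mem_map, mem_val, mem_erase]
    rintro _ ⟨i, ⟨hij, -⟩, rfl⟩
    exact pderiv_X_of_ne hij
  rw [esymm_eq_multiset_esymm, univ_val_map_X_eq_cons j, Multiset.esymm_cons_succ, map_add,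
    Derivation.leibniz, (pderiv j).map_esymm_eq_zero hker, (pderiv j).map_esymm_eq_zero hker]
  simp

theorem pderiv_neg_one_pow_mul_esymm_succ [CommRing R] (j : σ) (i : ℕ) :
    pderiv j ((-1) ^ (i + 1) * esymm σ R (i + 1)) =
      -∑ l ∈ range (i + 1), (-1) ^ (i - l) * esymm σ R (i - l) * X j ^ l := by
  have hconst : pderiv j ((-1) ^ (i + 1) : MvPolynomial σ R) = 0 := by
    simp [Derivation.leibniz_pow]
  rw [Derivation.leibniz, hconst, smul_zero, add_zero, pderiv_esymm_succ, smul_eq_mul, pow_succ,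
    mul_neg_one, neg_mul, Multiset.neg_one_pow_mul_esymm_eq_sum (X j), ← univ_val_map_X_eq_cons,
    ← esymm_eq_multiset_esymm]

end Fintype

variable (σ R : Type*) [Fintype σ] [CommRing R] (n : ℕ)

noncomputable def esymmToeplitz : Matrix (Fin n) (Fin n) (MvPolynomial σ R) :=
  Matrix.of fun i l => if l ≤ i then (-1) ^ ((i : ℕ) - l) * esymm σ R ((i : ℕ) - l) else 0

theorem det_esymmToeplitz : (esymmToeplitz σ R n).det = 1 := by
  have hlower : (esymmToeplitz σ R n).IsLowerTriangular := fun i l hil => if_neg (not_le.2 hil)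
  rw [Matrix.det_of_isLowerTriangular _ hlower]
  simp [esymmToeplitz]

theorem jacobian_signed_esymm_eq_neg_esymmToeplitz_mul (r : ℕ) :
    (Matrix.of fun i j : Fin r =>
        pderiv j ((-1) ^ ((i : ℕ) + 1) * esymm (Fin r) R ((i : ℕ) + 1))) =
      -(esymmToeplitz (Fin r) R r * (Matrix.vandermonde X).transpose) := by
  ext i j : 1
  simp only [Matrix.of_apply, pderiv_neg_one_pow_mul_esymm_succ, Matrix.neg_apply,
    Matrix.mul_apply, esymmToeplitz, Matrix.transpose_apply, Matrix.vandermonde_apply, ite_mul,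
    zero_mul]
  rw [Fin.sum_univ_ite_le_eq_sum_range i
    fun l => (-1) ^ ((i : ℕ) - l) * esymm (Fin r) R ((i : ℕ) - l) * X j ^ l]

end MvPolynomial

theorem det_jacobian_signed_esymm_general (R : Type) [CommRing R] (r : ℕ) :
    Matrix.det (Matrix.of fun i j : Fin r =>
      MvPolynomial.pderiv j
        ((-1 : MvPolynomial (Fin r) R) ^ ((i : ℕ) + 1)
          * MvPolynomial.esymm (Fin r) R ((i : ℕ) + 1)))
      = (-1 : MvPolynomial (Fin r) R) ^ r
          * ∏ p ∈ Finset.univ.filter (fun p : Fin r × Fin r => p.1 < p.2),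
              (MvPolynomial.X p.2 - MvPolynomial.X p.1) := by
  rw [jacobian_signed_esymm_eq_neg_esymmToeplitz_mul, Matrix.det_neg, Matrix.det_mul,
    det_esymmToeplitz, Matrix.det_transpose, Matrix.det_vandermonde,
    Fin.prod_univ_prod_Ioi_eq_prod_filter_lt, Fintype.card_fin, one_mul]

/-- The determinant of the Jacobian matrix of the signed elementary symmetric polynomials
`(-1)^i Π_i` (for `1 ≤ i ≤ r`) with respect to `X_1, …, X_r` equals
`(-1)^r ∏_{i < j} (X_j - X_i)`. Here the index `i : Fin r` corresponds to `Π_{i+1}` and the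
index `j : Fin r` to the variable `X_j`. -/
theorem det_jacobian_signed_esymm (R : Type) [CommRing R] (r : ℕ) (hr : 1 ≤ r) :
    Matrix.det (Matrix.of fun i j : Fin r =>
      MvPolynomial.pderiv j
        ((-1 : MvPolynomial (Fin r) R) ^ ((i : ℕ) + 1)
          * MvPolynomial.esymm (Fin r) R ((i : ℕ) + 1)))
      = (-1 : MvPolynomial (Fin r) R) ^ r
          * ∏ p ∈ Finset.univ.filter (fun p : Fin r × Fin r => p.1 < p.2),
              (MvPolynomial.X p.2 - MvPolynomial.X p.1) :=
  det_jacobian_signed_esymm_general R r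
end

section
/- Let r ≥ 1 and fix l with 1 ≤ l ≤ r. Let H_i denote the complete homogeneous symmetric polynomial of degree i in the variables X_1,…,X_r, and let Π*_j denote the j-th elementary symmetric polynomial in the r−1 variables X_1,…,X_{l−1},X_{l+1},…,X_r. Then for every k with 0 ≤ k ≤ r−1, ∑_{i=0}^{k} (−1)^{r−i−1}·H_i·Π*_{k−i} = (−1)^{r−k−1}·X_l^k. -/
/-!
In `A⟦t⟧` the generating series `∑ Hₙ tⁿ` is `∏ᵥ (1 - Xᵥ t)⁻¹`. Multiplying it by
`∏_{v ≠ l} (1 - Xᵥ t) = ∑ⱼ (-1)ʲ Π*ⱼ tʲ` leaves `(1 - X_l t)⁻¹ = ∑ X_lᵏ tᵏ`, and comparing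
coefficients of `tᵏ` gives `∑ᵢ (-1)^(k-i) Hᵢ Π*_{k-i} = X_lᵏ`. Since `i ≤ k ≤ r - 1`, the sign
`(-1)^(r-i-1)` factors as `(-1)^(r-k-1) (-1)^(k-i)`.
-/

open MvPolynomial Finset

namespace PowerSeries

variable {A : Type*} [CommRing A]

theorem one_sub_C_mul_X_mul_mk_pow (a : A) : (1 - C a * X) * mk (a ^ ·) = 1 := by
  simpa [rescale_mk, mul_comm] using congrArg (rescale a) (mk_one_mul_one_sub_eq_one A)

theorem coeff_prod_one_sub_C_mul_X {ι : Type*} (s : Finset ι) (x : ι → A) (n : ℕ) :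
    coeff n (∏ i ∈ s, (1 - C (x i) * X)) = (-1) ^ n * ∑ t ∈ s.powersetCard n, ∏ i ∈ t, x i := by
  have hterm (t : Finset ι) :
      ∏ i ∈ t, -(C (x i) * X) = C ((-1) ^ #t * ∏ i ∈ t, x i) * X ^ #t := by
    simp [prod_neg, prod_mul_distrib, mul_assoc]
  simp_rw [sub_eq_add_neg, prod_one_add, hterm, map_sum, coeff_C_mul_X_pow, sum_ite,
    sum_const_zero, add_zero, powersetCard_eq_filter, mul_sum]
  refine sum_congr (filter_congr fun t _ => eq_comm) fun t ht => ?_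
  rw [(mem_filter.1 ht).2]

end PowerSeries

namespace MvPolynomial

section

variable (σ R : Type*) [Fintype σ] [DecidableEq σ] [CommSemiring R]

theorem hsymm_eq_sum_finsuppAntidiag (n : ℕ) :
    hsymm σ R n = ∑ f ∈ finsuppAntidiag univ n, ∏ i, X i ^ f i := by
  have hcard {f : σ →₀ ℕ} (hf : f ∈ finsuppAntidiag univ n) :
      Multiset.card (Finsupp.toMultiset f) = n := by
    simpa [Finsupp.card_toMultiset, Finsupp.sum_fintype] using (mem_finsuppAntidiag.1 hf).1
  refine sum_bij' (fun s _ => Multiset.toFinsupp s.1) (fun f hf => ⟨Finsupp.toMultiset f, hcard hf⟩)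
    (fun s _ => ?_) (fun _ _ => mem_univ _) (fun s _ => ?_) (fun f _ => ?_) (fun s _ => ?_)
  · refine mem_finsuppAntidiag.2 ⟨?_, subset_univ _⟩
    exact (Finsupp.sum_fintype _ _ fun _ => rfl).symm.trans ((Multiset.toFinsupp_sum_eq _).trans s.2)
  · exact Sym.ext (Multiset.toFinsupp_toMultiset s.1)
  · exact Finsupp.toMultiset_toFinsupp f
  · rw [prod_multiset_map_count]
    exact Finsupp.prod_fintype (Multiset.toFinsupp s.1) (fun i k => X i ^ k) fun _ => pow_zero _

theorem mk_hsymm_eq_prod_mk_pow :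
    PowerSeries.mk (hsymm σ R ·) = ∏ i, PowerSeries.mk ((X i : MvPolynomial σ R) ^ ·) := by
  ext n : 1
  simp only [PowerSeries.coeff_mk, PowerSeries.coeff_prod, hsymm_eq_sum_finsuppAntidiag]

end

section

variable {σ : Type*} [Fintype σ] [DecidableEq σ] {A : Type*} [CommRing A]

theorem prod_one_sub_C_X_mul_mk_hsymm :
    (∏ i, (1 - PowerSeries.C (X i : MvPolynomial σ A) * PowerSeries.X)) *
      PowerSeries.mk (hsymm σ A ·) = 1 := by
  rw [mk_hsymm_eq_prod_mk_pow, ← prod_mul_distrib]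
  simp only [PowerSeries.one_sub_C_mul_X_mul_mk_pow, prod_const_one]

theorem prod_erase_one_sub_C_X_mul_mk_hsymm (l : σ) :
    (∏ i ∈ univ.erase l, (1 - PowerSeries.C (X i : MvPolynomial σ A) * PowerSeries.X)) *
      PowerSeries.mk (hsymm σ A ·) = PowerSeries.mk (X l ^ ·) := by
  calc _ = (∏ i ∈ univ.erase l, (1 - PowerSeries.C (X i : MvPolynomial σ A) * PowerSeries.X)) *
        PowerSeries.mk (hsymm σ A ·) *
        ((1 - PowerSeries.C (X l) * PowerSeries.X) * PowerSeries.mk (X l ^ ·)) := by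
        rw [PowerSeries.one_sub_C_mul_X_mul_mk_pow, mul_one]
    _ = (∏ i, (1 - PowerSeries.C (X i : MvPolynomial σ A) * PowerSeries.X)) *
        PowerSeries.mk (hsymm σ A ·) * PowerSeries.mk (X l ^ ·) := by
        rw [← mul_prod_erase univ _ (mem_univ l)]
        ring
    _ = PowerSeries.mk (X l ^ ·) := by rw [prod_one_sub_C_X_mul_mk_hsymm, one_mul]

theorem sum_hsymm_mul_signed_esymm_erase (l : σ) (k : ℕ) :
    ∑ i ∈ range (k + 1), hsymm σ A i *
        ((-1) ^ (k - i) * ∑ t ∈ powersetCard (k - i) (univ.erase l), ∏ v ∈ t, X v) =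
      X l ^ k := by
  have := congrArg (PowerSeries.coeff k) (prod_erase_one_sub_C_X_mul_mk_hsymm (A := A) l)
  rw [mul_comm, PowerSeries.coeff_mul, Nat.sum_antidiagonal_eq_sum_range_succ_mk] at this
  simpa only [PowerSeries.coeff_mk, PowerSeries.coeff_prod_one_sub_C_mul_X] using this

end

end MvPolynomial

theorem hsymm_esymm_omit_alternating_sum_general (R : Type) [CommRing R] (r : ℕ)
    (l : Fin r) (k : ℕ) (hk : k ≤ r - 1) :
    ∑ i ∈ Finset.range (k + 1),
        (-1 : MvPolynomial (Fin r) R) ^ (r - i - 1)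
          * MvPolynomial.hsymm (Fin r) R i
          * ∑ t ∈ Finset.powersetCard (k - i) (Finset.univ.erase l),
              ∏ v ∈ t, MvPolynomial.X v
      = (-1 : MvPolynomial (Fin r) R) ^ (r - k - 1) * MvPolynomial.X l ^ k := by
  rw [← sum_hsymm_mul_signed_esymm_erase l k, mul_sum]
  refine sum_congr rfl fun i hi => ?_
  have hsign : r - i - 1 = (r - k - 1) + (k - i) := by
    have := mem_range.1 hi
    omega
  rw [hsign, pow_add]
  ring

/-- For `0 ≤ k ≤ r - 1` and a variable index `l`,
`∑_{i=0}^{k} (-1)^{r-i-1} H_i Π*_{k-i} = (-1)^{r-k-1} X_l^k`, where `H_i` is the complete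
homogeneous symmetric polynomial of degree `i` in `X_1, …, X_r` and `Π*_j` is the `j`-th
elementary symmetric polynomial in the variables `X_1, …, X_r` with `X_l` omitted. -/
theorem hsymm_esymm_omit_alternating_sum (R : Type) [CommRing R] (r : ℕ) (hr : 1 ≤ r)
    (l : Fin r) (k : ℕ) (hk : k ≤ r - 1) :
    ∑ i ∈ Finset.range (k + 1),
        (-1 : MvPolynomial (Fin r) R) ^ (r - i - 1)
          * MvPolynomial.hsymm (Fin r) R i
          * ∑ t ∈ Finset.powersetCard (k - i) (Finset.univ.erase l),
              ∏ v ∈ t, MvPolynomial.X v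
      = (-1 : MvPolynomial (Fin r) R) ^ (r - k - 1) * MvPolynomial.X l ^ k :=
  hsymm_esymm_omit_alternating_sum_general R r l k hk
end

section
/- Let G be a nonzero polynomial over F_q in the variables A_{r−1},…,A_{k+1},A_{k−1},…,A_0, let d := wt(G) be its weighted total degree and G^wt its component of highest weight. Let R ∈ F_q[X_1,…,X_r] be obtained from G by substituting (−1)^{r−j}·Π_{r−j} for A_j (for every j ≠ k). Then R is nonzero, the total degree of R equals d, and the homogeneous component of R of degree d equals the polynomial obtained from G^wt by the same substitution A_j ↦ (−1)^{r−j}·Π_{r−j}. -/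
/-!
Substituting for each variable a polynomial that is homogeneous of degree equal to the
variable's weight sends weighted-homogeneous polynomials of weight `n` to homogeneous
polynomials of degree `n`, so it carries the weighted-homogeneous decomposition of `G` onto the
homogeneous decomposition of `R`. Up to the involution `A_j ↦ (-1)^{r-j} A_j`, the substitution
`A_j ↦ Π_{r-j}` is injective, because distinct elementary symmetric polynomials are
algebraically independent (fundamental theorem of symmetric polynomials). Hence the top
weighted component of `G` survives the substitution, and `R` has total degree exactly `wt(G)`.
-/

namespace MvPolynomial

variable {σ τ R : Type*}

section CommSemiring

variable [CommSemiring R]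

variable (σ R) in
theorem isHomogeneous_esymm [Fintype σ] (n : ℕ) : (esymm σ R n).IsHomogeneous n := by
  refine IsHomogeneous.sum _ _ n fun t ht => ?_
  simpa [(Finset.mem_powersetCard.mp ht).2] using
    IsHomogeneous.prod t _ (fun _ => 1) fun i _ => isHomogeneous_X R i

theorem weightedHomogeneousComponent_weightedTotalDegree_ne_zero (w : σ → ℕ)
    {p : MvPolynomial σ R} (hp : p ≠ 0) :
    weightedHomogeneousComponent w (weightedTotalDegree w p) p ≠ 0 := by
  classical
  obtain ⟨m, hm, hmax⟩ := Finset.exists_mem_eq_sup p.support (support_nonempty.mpr hp)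
    (Finsupp.weight w)
  intro h
  have := coeff_weightedHomogeneousComponent (w := w) (weightedTotalDegree w p) p m
  rw [h, coeff_zero,
    if_pos (show Finsupp.weight w m = weightedTotalDegree w p from hmax.symm)] at this
  exact mem_support_iff.mp hm this.symm

variable {w : σ → ℕ} {f : σ → MvPolynomial τ R}

theorem isHomogeneous_aeval_monomial (hf : ∀ i, (f i).IsHomogeneous (w i)) (m : σ →₀ ℕ)
    (c : R) : (aeval f (monomial m c)).IsHomogeneous (Finsupp.weight w m) := by
  rw [aeval_monomial, ← zero_add (Finsupp.weight w m), algebraMap_eq]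
  refine (isHomogeneous_C τ c).mul ?_
  rw [Finsupp.weight_apply, Finsupp.sum, Finsupp.prod]
  simpa only [smul_eq_mul, mul_comm] using
    IsHomogeneous.prod m.support _ _ fun i _ => (hf i).pow (m i)

theorem homogeneousComponent_aeval (hf : ∀ i, (f i).IsHomogeneous (w i)) (n : ℕ)
    (p : MvPolynomial σ R) :
    homogeneousComponent n (aeval f p) = aeval f (weightedHomogeneousComponent w n p) := by
  classical
  induction p using MvPolynomial.induction_on' with
  | monomial m c =>
    rw [homogeneousComponent_of_mem (isHomogeneous_aeval_monomial hf m c),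
      weightedHomogeneousComponent_of_mem (isWeightedHomogeneous_monomial w m c rfl)]
    split_ifs <;> simp
  | add p q hp hq => simp only [map_add, hp, hq]

theorem totalDegree_aeval_of_injective (hf : ∀ i, (f i).IsHomogeneous (w i))
    (hinj : Function.Injective (aeval (R := R) f)) (p : MvPolynomial σ R) :
    (aeval f p).totalDegree = weightedTotalDegree w p := by
  classical
  apply le_antisymm
  · refine Finset.sup_le fun s hs => ?_
    have hcomp : weightedHomogeneousComponent w s.degree p ≠ 0 := by
      intro h
      have := coeff_homogeneousComponent (R := R) s.degree (aeval f p) s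
      rw [homogeneousComponent_aeval hf, h, map_zero, coeff_zero, if_pos rfl] at this
      exact mem_support_iff.mp hs this.symm
    exact not_lt.mp (mt (weightedHomogeneousComponent_eq_zero _ _) hcomp)
  · obtain rfl | hp := eq_or_ne p 0
    · simp [weightedTotalDegree_zero]
    refine not_lt.mp fun hlt => ?_
    have := homogeneousComponent_eq_zero _ _ hlt
    rw [homogeneousComponent_aeval hf] at this
    exact weightedHomogeneousComponent_weightedTotalDegree_ne_zero w hp
      (hinj (this.trans (map_zero _).symm))

end CommSemiring

section CommRing

variable [CommRing R]

theorem injective_aeval_esymm [Fintype σ] {ι : Type*} (e : ι → ℕ) (he : Function.Injective e)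
    (he_pos : ∀ i, 0 < e i) (he_le : ∀ i, e i ≤ Fintype.card σ) :
    Function.Injective (aeval (R := R) fun i => esymm σ R (e i)) := by
  let e' : ι → Fin (Fintype.card σ) := fun i =>
    ⟨e i - 1, by have := he_le i; have := he_pos i; omega⟩
  have he' : Function.Injective e' := fun i j hij => by
    have := he_pos i; have := he_pos j
    have : e i - 1 = e j - 1 := congrArg Fin.val hij
    exact he (by omega)
  have hfactor : (aeval fun i => esymm σ R (e i)) =
      ((symmetricSubalgebra σ R).val.comp (esymmAlgHom σ R _)).comp (rename e') := by
    refine algHom_ext fun i => ?_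
    simp [esymmAlgHom, e', Nat.sub_add_cancel (he_pos i)]
  rw [hfactor]
  exact Subtype.val_injective.comp
    ((esymmAlgHom_injective R le_rfl).comp (rename_injective e' he'))

theorem injective_aeval_neg_one_pow_mul {g : σ → MvPolynomial τ R} (n : σ → ℕ)
    (hg : Function.Injective (aeval (R := R) g)) :
    Function.Injective (aeval (R := R) fun i => (-1) ^ n i * g i) := by
  let twist : MvPolynomial σ R →ₐ[R] MvPolynomial σ R := aeval fun i => (-1) ^ n i * X i
  have htwist : twist.comp twist = AlgHom.id R _ := algHom_ext fun i => by
    simp [twist, ← mul_assoc, ← mul_pow]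
  have hfactor : (aeval fun i => (-1) ^ n i * g i) = (aeval g).comp twist :=
    algHom_ext fun i => by simp [twist]
  rw [hfactor, AlgHom.coe_comp]
  exact hg.comp (Function.LeftInverse.injective (g := twist) (DFunLike.congr_fun htwist))

end CommRing

end MvPolynomial

open MvPolynomial

theorem substitution_degree_and_highest_component_general
    (Fq : Type) [Field Fq]
    (r : ℕ) (k : Fin r)
    (G : MvPolynomial {j : Fin r // j ≠ k} Fq) (hG : G ≠ 0)
    (d : ℕ)
    (hd : d = MvPolynomial.weightedTotalDegree
        (fun j : {j : Fin r // j ≠ k} => r - (j.1 : ℕ)) G)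
    (R : MvPolynomial (Fin r) Fq)
    (hR : R = MvPolynomial.aeval
        (fun j : {j : Fin r // j ≠ k} =>
          (-1 : MvPolynomial (Fin r) Fq) ^ (r - (j.1 : ℕ))
            * MvPolynomial.esymm (Fin r) Fq (r - (j.1 : ℕ))) G) :
    R ≠ 0 ∧ R.totalDegree = d
      ∧ MvPolynomial.homogeneousComponent d R
        = MvPolynomial.aeval
            (fun j : {j : Fin r // j ≠ k} =>
              (-1 : MvPolynomial (Fin r) Fq) ^ (r - (j.1 : ℕ))
                * MvPolynomial.esymm (Fin r) Fq (r - (j.1 : ℕ)))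
            (MvPolynomial.weightedHomogeneousComponent
              (fun j : {j : Fin r // j ≠ k} => r - (j.1 : ℕ)) d G) := by
  subst hd hR
  set w : {j : Fin r // j ≠ k} → ℕ := fun j => r - (j.1 : ℕ)
  have hw : Function.Injective w := fun i j hij => by
    have := i.1.2; have := j.1.2
    simp only [w] at hij
    exact Subtype.ext (Fin.ext (by omega))
  have hf : ∀ j, ((-1 : MvPolynomial (Fin r) Fq) ^ w j * esymm (Fin r) Fq (w j)).IsHomogeneous
      (w j) := fun j => by
    simpa using (isHomogeneous_esymm (Fin r) Fq (w j)).C_mul ((-1) ^ w j)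
  have hinj := injective_aeval_neg_one_pow_mul w <|
    injective_aeval_esymm (σ := Fin r) (R := Fq) w hw
      (fun j => by have := j.1.2; simp only [w]; omega) (fun j => by simp [w])
  exact ⟨(map_ne_zero_iff _ hinj).mpr hG, totalDegree_aeval_of_injective hf hinj G,
    homogeneousComponent_aeval hf _ G⟩

/-- Let `G` be a nonzero polynomial in the variables `A_j` (`j ≠ k`), each `A_j` of weight
`r - j`, let `d` be its weighted total degree and `G^wt` its component of highest weight.
If `R` is obtained from `G` by the substitution `A_j ↦ (-1)^{r-j} Π_{r-j}` into the
elementary symmetric polynomials of `X_1, …, X_r`, then `R ≠ 0`, the total degree of `R`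
equals `d`, and the homogeneous component of `R` of degree `d` is the image of `G^wt` under
the same substitution. -/
theorem substitution_degree_and_highest_component
    (Fq : Type) [Field Fq] [Fintype Fq]
    (r : ℕ) (hr : 1 ≤ r) (k : Fin r)
    (G : MvPolynomial {j : Fin r // j ≠ k} Fq) (hG : G ≠ 0)
    (d : ℕ)
    (hd : d = MvPolynomial.weightedTotalDegree
        (fun j : {j : Fin r // j ≠ k} => r - (j.1 : ℕ)) G)
    (R : MvPolynomial (Fin r) Fq)
    (hR : R = MvPolynomial.aeval
        (fun j : {j : Fin r // j ≠ k} =>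
          (-1 : MvPolynomial (Fin r) Fq) ^ (r - (j.1 : ℕ))
            * MvPolynomial.esymm (Fin r) Fq (r - (j.1 : ℕ))) G) :
    R ≠ 0 ∧ R.totalDegree = d
      ∧ MvPolynomial.homogeneousComponent d R
        = MvPolynomial.aeval
            (fun j : {j : Fin r // j ≠ k} =>
              (-1 : MvPolynomial (Fin r) Fq) ^ (r - (j.1 : ℕ))
                * MvPolynomial.esymm (Fin r) Fq (r - (j.1 : ℕ)))
            (MvPolynomial.weightedHomogeneousComponent
              (fun j : {j : Fin r // j ≠ k} => r - (j.1 : ℕ)) d G) :=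
  substitution_degree_and_highest_component_general Fq r k G hG d hd R hR
end

section
/- Let K be an algebraic closure of a finite field F_q and let F_1,…,F_m ∈ K[A_0,…,A_{r−1}] be nonzero polynomials. Fix an assignment of a positive integer weight wt(A_j) to each variable A_j, and for a nonzero polynomial F let F^wt denote its component of highest weight (its weighted-homogeneous component of weighted degree equal to its weighted total degree). If F_1^wt,…,F_m^wt form a regular sequence of K[A_0,…,A_{r−1}], then F_1,…,F_m form a regular sequence of K[A_0,…,A_{r−1}]. -/
/-!
Write `I = (F_1, …, F_k)` and `J = (F_1^wt, …, F_k^wt)`. By induction on `k`, `J` is the initial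
ideal of `I`: the highest weight component of every `g ∈ I` lies in `J`, and every weighted
component of an element of `J` is the component of an element of `I` of no larger degree.
For the first inclusion at `k + 1`, write `g = g' + h F_{k+1}` with `g' ∈ I` and `h` of least
degree. If the top components of `g'` and `h F_{k+1}` do not cancel we are done; if they do,
`h^wt F_{k+1}^wt ∈ J`, so `h^wt ∈ J` by regularity, and subtracting from `h` an element of `I`
with top component `h^wt` lowers its degree. The same descent shows that `F_{k+1} g ∈ I` forces
`g ∈ I`, and `1 ∈ I` would give `1 = 1^wt ∈ J`.
-/

lemma isSMulRegular_quotient_ideal_smul_top_iff {A : Type*} [CommRing A] (I : Ideal A) (r : A) :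
    IsSMulRegular (A ⧸ (I • ⊤ : Submodule A A)) r ↔ ∀ g, r * g ∈ I → g ∈ I := by
  rw [isSMulRegular_quotient_iff_mem_of_smul_mem, smul_eq_mul, Ideal.mul_top]
  rfl

namespace MvPolynomial

variable {σ R : Type*} [CommRing R] {w : σ → ℕ}

lemma weightedTotalDegree_le_iff {p : MvPolynomial σ R} {n : ℕ} :
    weightedTotalDegree w p ≤ n ↔ ∀ d ∈ p.support, Finsupp.weight w d ≤ n :=
  Finset.sup_le_iff

lemma weightedTotalDegree_add_le (p q : MvPolynomial σ R) :
    weightedTotalDegree w (p + q) ≤ max (weightedTotalDegree w p) (weightedTotalDegree w q) := by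
  classical
  refine weightedTotalDegree_le_iff.2 fun d hd => ?_
  rcases Finset.mem_union.1 (support_add hd) with hd | hd
  · exact le_max_of_le_left (le_weightedTotalDegree w hd)
  · exact le_max_of_le_right (le_weightedTotalDegree w hd)

@[simp]
lemma weightedTotalDegree_neg (p : MvPolynomial σ R) :
    weightedTotalDegree w (-p) = weightedTotalDegree w p := by
  rw [weightedTotalDegree, support_neg, weightedTotalDegree]

lemma weightedTotalDegree_sub_le (p q : MvPolynomial σ R) :
    weightedTotalDegree w (p - q) ≤ max (weightedTotalDegree w p) (weightedTotalDegree w q) := by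
  simpa [sub_eq_add_neg] using weightedTotalDegree_add_le p (-q)

lemma weightedTotalDegree_mul_le (p q : MvPolynomial σ R) :
    weightedTotalDegree w (p * q) ≤ weightedTotalDegree w p + weightedTotalDegree w q := by
  classical
  refine weightedTotalDegree_le_iff.2 fun d hd => ?_
  obtain ⟨a, ha, b, hb, rfl⟩ := Finset.mem_add.1 (support_mul p q hd)
  rw [map_add]
  exact add_le_add (le_weightedTotalDegree w ha) (le_weightedTotalDegree w hb)

lemma weightedTotalDegree_weightedHomogeneousComponent_le (p : MvPolynomial σ R) (n : ℕ) :
    weightedTotalDegree w (weightedHomogeneousComponent w n p) ≤ n :=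
  weightedTotalDegree_le_iff.2 fun _ hd =>
    (weightedHomogeneousComponent_isWeightedHomogeneous n p (mem_support_iff.1 hd)).le

lemma coeff_eq_zero_of_weightedTotalDegree_lt {p : MvPolynomial σ R} {d : σ →₀ ℕ}
    (h : weightedTotalDegree w p < Finsupp.weight w d) : coeff d p = 0 :=
  notMem_support_iff.1 fun hd => h.not_ge (le_weightedTotalDegree w hd)

lemma weightedHomogeneousComponent_mul_of_le {p q : MvPolynomial σ R} {a b : ℕ}
    (hp : weightedTotalDegree w p ≤ a) (hq : weightedTotalDegree w q ≤ b) :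
    weightedHomogeneousComponent w (a + b) (p * q) =
      weightedHomogeneousComponent w a p * weightedHomogeneousComponent w b q := by
  classical
  ext d
  rw [coeff_weightedHomogeneousComponent]
  split_ifs with hd
  · rw [coeff_mul, coeff_mul]
    refine Finset.sum_congr rfl fun x hx => ?_
    rw [Finset.HasAntidiagonal.mem_antidiagonal] at hx
    rw [← hx, map_add] at hd
    simp only [coeff_weightedHomogeneousComponent]
    rcases lt_trichotomy (Finsupp.weight w x.1) a with h | h | h
    · rw [if_neg h.ne, zero_mul, coeff_eq_zero_of_weightedTotalDegree_lt (hq.trans_lt (by omega)),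
        mul_zero]
    · rw [if_pos h, if_pos (by omega)]
    · rw [if_neg h.ne', zero_mul, coeff_eq_zero_of_weightedTotalDegree_lt (hp.trans_lt h),
        zero_mul]
  · exact ((weightedHomogeneousComponent_isWeightedHomogeneous a p).mul
      (weightedHomogeneousComponent_isWeightedHomogeneous b q)).coeff_eq_zero d hd |>.symm

lemma weightedHomogeneousComponent_mul_of_isWeightedHomogeneous {p q : MvPolynomial σ R} {e : ℕ}
    (hq : IsWeightedHomogeneous w q e) (n : ℕ) :
    weightedHomogeneousComponent w n (p * q) =
      if e ≤ n then weightedHomogeneousComponent w (n - e) p * q else 0 := by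
  classical
  let := weightedGradedAlgebra R w
  simp_rw [← weightedDecomposition.decompose'_apply]
  exact DirectSum.coe_decompose_mul_of_right_mem _ n hq

variable (w) in
noncomputable def highestWeightComponent (p : MvPolynomial σ R) : MvPolynomial σ R :=
  weightedHomogeneousComponent w (weightedTotalDegree w p) p

@[simp]
lemma highestWeightComponent_zero : highestWeightComponent w (0 : MvPolynomial σ R) = 0 :=
  map_zero _

lemma IsWeightedHomogeneous.highestWeightComponent_eq {p : MvPolynomial σ R} {n : ℕ}
    (hp : IsWeightedHomogeneous w p n) : highestWeightComponent w p = p := by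
  rcases eq_or_ne p 0 with rfl | hne
  · exact highestWeightComponent_zero
  · have hdeg : weightedTotalDegree w p = n := WithBot.coe_injective <|
      (weightedTotalDegree_coe w p hne).symm.trans (hp.weighted_total_degree hne)
    rw [highestWeightComponent, hdeg, hp.weightedHomogeneousComponent_same]

lemma isWeightedHomogeneous_highestWeightComponent (p : MvPolynomial σ R) :
    IsWeightedHomogeneous w (highestWeightComponent w p) (weightedTotalDegree w p) :=
  weightedHomogeneousComponent_isWeightedHomogeneous _ p

lemma weightedHomogeneousComponent_highestWeightComponent (p : MvPolynomial σ R) :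
    weightedHomogeneousComponent w (weightedTotalDegree w p) (highestWeightComponent w p) =
      highestWeightComponent w p :=
  (isWeightedHomogeneous_highestWeightComponent p).weightedHomogeneousComponent_same

lemma highestWeightComponent_ne_zero {p : MvPolynomial σ R} (hp : p ≠ 0) :
    highestWeightComponent w p ≠ 0 := by
  classical
  obtain ⟨d, hd, hsup⟩ := Finset.exists_mem_eq_sup p.support (support_nonempty.2 hp)
    (Finsupp.weight w)
  refine ne_zero_iff.2 ⟨d, ?_⟩
  rwa [highestWeightComponent, coeff_weightedHomogeneousComponent,
    if_pos (by rw [weightedTotalDegree, hsup]), ← mem_support_iff]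

lemma weightedTotalDegree_lt_of_weightedHomogeneousComponent_eq_zero {p : MvPolynomial σ R}
    {n : ℕ} (hp : p ≠ 0) (hle : weightedTotalDegree w p ≤ n)
    (hn : weightedHomogeneousComponent w n p = 0) : weightedTotalDegree w p < n :=
  hle.lt_of_ne fun h => highestWeightComponent_ne_zero hp (h ▸ hn)

lemma highestWeightComponent_mul [NoZeroDivisors R] (p q : MvPolynomial σ R) :
    highestWeightComponent w (p * q) = highestWeightComponent w p * highestWeightComponent w q := by
  rcases eq_or_ne p 0 with rfl | hp
  · simp
  rcases eq_or_ne q 0 with rfl | hq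
  · simp
  have htop := weightedHomogeneousComponent_mul_of_le (w := w) (p := p) (q := q) le_rfl le_rfl
  have hdeg : weightedTotalDegree w (p * q) = weightedTotalDegree w p + weightedTotalDegree w q :=
    (weightedTotalDegree_mul_le p q).antisymm <| not_lt.1 fun hlt =>
      mul_ne_zero (highestWeightComponent_ne_zero hp) (highestWeightComponent_ne_zero hq) <|
        htop ▸ weightedHomogeneousComponent_eq_zero _ _ hlt
  rw [highestWeightComponent, hdeg, htop]
  rfl

variable {I J I' J' : Ideal (MvPolynomial σ R)}

variable (w) in
/-- For `J = (F_1^wt, …)` and `I = (F_1, …)` this is the inclusion of `J` in the initial ideal of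
`I`, degree by degree. -/
def WeightedComponentsLift (J I : Ideal (MvPolynomial σ R)) : Prop :=
  ∀ p ∈ J, ∀ n, ∃ q ∈ I, weightedTotalDegree w q ≤ n ∧
    weightedHomogeneousComponent w n q = weightedHomogeneousComponent w n p

lemma WeightedComponentsLift.sup (h : WeightedComponentsLift w J I)
    (h' : WeightedComponentsLift w J' I') : WeightedComponentsLift w (J ⊔ J') (I ⊔ I') := by
  intro p hp n
  obtain ⟨p₁, hp₁, p₂, hp₂, rfl⟩ := Submodule.mem_sup.1 hp
  obtain ⟨q₁, hq₁, hdeg₁, hcomp₁⟩ := h p₁ hp₁ n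
  obtain ⟨q₂, hq₂, hdeg₂, hcomp₂⟩ := h' p₂ hp₂ n
  refine ⟨q₁ + q₂, Submodule.add_mem_sup hq₁ hq₂, ?_, by rw [map_add, map_add, hcomp₁, hcomp₂]⟩
  exact (weightedTotalDegree_add_le q₁ q₂).trans (max_le hdeg₁ hdeg₂)

lemma weightedComponentsLift_span_singleton (f : MvPolynomial σ R) :
    WeightedComponentsLift w (Ideal.span {highestWeightComponent w f}) (Ideal.span {f}) := by
  intro p hp n
  obtain ⟨a, rfl⟩ := Ideal.mem_span_singleton'.1 hp
  rw [weightedHomogeneousComponent_mul_of_isWeightedHomogeneous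
    (isWeightedHomogeneous_highestWeightComponent f)]
  split_ifs with hle
  · refine ⟨weightedHomogeneousComponent w (n - weightedTotalDegree w f) a * f,
      Ideal.mul_mem_left _ _ (Ideal.mem_span_singleton_self f), ?_, ?_⟩
    · exact (weightedTotalDegree_mul_le _ _).trans
        (by have := weightedTotalDegree_weightedHomogeneousComponent_le (w := w) a
              (n - weightedTotalDegree w f); omega)
    · have h := weightedHomogeneousComponent_mul_of_le (w := w) (q := f)
        (weightedTotalDegree_weightedHomogeneousComponent_le a (n - weightedTotalDegree w f)) le_rfl
      rwa [Nat.sub_add_cancel hle,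
        (weightedHomogeneousComponent_isWeightedHomogeneous _ a).weightedHomogeneousComponent_same]
        at h
  · exact ⟨0, zero_mem _, (weightedTotalDegree_zero w).trans_le n.zero_le, map_zero _⟩

lemma weightedComponentsLift_ofList (L : List (MvPolynomial σ R)) :
    WeightedComponentsLift w (Ideal.ofList (L.map (highestWeightComponent w)))
      (Ideal.ofList L) := by
  induction L with
  | nil =>
    intro p hp n
    rw [List.map_nil, Ideal.ofList_nil, Ideal.mem_bot] at hp
    exact ⟨0, zero_mem _, (weightedTotalDegree_zero w).trans_le n.zero_le, by rw [hp]⟩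
  | cons f L ih =>
    rw [List.map_cons, Ideal.ofList_cons, Ideal.ofList_cons]
    exact (weightedComponentsLift_span_singleton f).sup ih

lemma weightedHomogeneousComponent_mem_of_weightedTotalDegree_le
    (hIJ : ∀ g ∈ I, highestWeightComponent w g ∈ J) {g : MvPolynomial σ R} (hg : g ∈ I) {n : ℕ}
    (hn : weightedTotalDegree w g ≤ n) : weightedHomogeneousComponent w n g ∈ J := by
  rcases hn.eq_or_lt with rfl | hlt
  · exact hIJ g hg
  · rw [weightedHomogeneousComponent_eq_zero _ _ hlt]
    exact zero_mem J

lemma exists_mem_sub_eq_zero_or_weightedTotalDegree_lt (hJI : WeightedComponentsLift w J I)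
    {h : MvPolynomial σ R} (hh : highestWeightComponent w h ∈ J) :
    ∃ q ∈ I, h - q = 0 ∨ weightedTotalDegree w (h - q) < weightedTotalDegree w h := by
  obtain ⟨q, hq, hdeg, hcomp⟩ := hJI _ hh (weightedTotalDegree w h)
  refine ⟨q, hq, or_iff_not_imp_left.2 fun hne =>
    weightedTotalDegree_lt_of_weightedHomogeneousComponent_eq_zero hne
      ((weightedTotalDegree_sub_le h q).trans (max_le le_rfl hdeg)) ?_⟩
  rw [map_sub, hcomp, weightedHomogeneousComponent_highestWeightComponent]
  exact sub_self _

variable [NoZeroDivisors R]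

lemma highestWeightComponent_mem_span_singleton {f g : MvPolynomial σ R}
    (hg : g ∈ Ideal.span {f}) :
    highestWeightComponent w g ∈ Ideal.span {highestWeightComponent w f} := by
  obtain ⟨a, rfl⟩ := Ideal.mem_span_singleton'.1 hg
  rw [highestWeightComponent_mul]
  exact Ideal.mul_mem_left _ _ (Ideal.mem_span_singleton_self _)

lemma mem_of_mul_mem_of_highestWeightComponent (hIJ : ∀ g ∈ I, highestWeightComponent w g ∈ J)
    (hJI : WeightedComponentsLift w J I) {f : MvPolynomial σ R}
    (hf : ∀ g, highestWeightComponent w f * g ∈ J → g ∈ J) {g : MvPolynomial σ R}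
    (hg : f * g ∈ I) : g ∈ I := by
  induction hn : weightedTotalDegree w g using Nat.strong_induction_on generalizing g with
  | _ n ih =>
  have hlead : highestWeightComponent w g ∈ J :=
    hf _ (highestWeightComponent_mul f g ▸ hIJ _ hg)
  obtain ⟨q, hq, hzero | hlt⟩ := exists_mem_sub_eq_zero_or_weightedTotalDegree_lt hJI hlead
  · rwa [sub_eq_zero.1 hzero]
  · have hfq : f * (g - q) ∈ I := by
      rw [mul_sub]
      exact sub_mem hg (I.mul_mem_left f hq)
    simpa using add_mem (ih _ (hn ▸ hlt) hfq rfl) hq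

lemma highestWeightComponent_mem_sup_span_singleton_of_sub_mul_mem
    (hIJ : ∀ g ∈ I, highestWeightComponent w g ∈ J) (hJI : WeightedComponentsLift w J I)
    {f : MvPolynomial σ R} (hf : ∀ g, highestWeightComponent w f * g ∈ J → g ∈ J)
    {g h : MvPolynomial σ R} (hi : g - h * f ∈ I) :
    highestWeightComponent w g ∈ J ⊔ Ideal.span {highestWeightComponent w f} := by
  induction hn : weightedTotalDegree w h using Nat.strong_induction_on generalizing h with
  | _ n ih =>
  have hdeg := weightedTotalDegree_sub_le (w := w) g (h * f)
  by_cases hle : weightedTotalDegree w (h * f) ≤ weightedTotalDegree w g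
  · have hsplit : highestWeightComponent w g = weightedHomogeneousComponent w
        (weightedTotalDegree w g) (g - h * f) +
        weightedHomogeneousComponent w (weightedTotalDegree w g) (h * f) := by
      rw [← map_add, sub_add_cancel]
      rfl
    rw [hsplit]
    refine add_mem (Ideal.mem_sup_left ?_) (Ideal.mem_sup_right ?_)
    · exact weightedHomogeneousComponent_mem_of_weightedTotalDegree_le hIJ hi
        (hdeg.trans (max_le le_rfl hle))
    · exact weightedHomogeneousComponent_mem_of_weightedTotalDegree_le
        (fun _ => highestWeightComponent_mem_span_singleton)
        (Ideal.mul_mem_left _ _ (Ideal.mem_span_singleton_self f)) hle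
  · rw [not_le] at hle
    have hcancel : weightedHomogeneousComponent w (weightedTotalDegree w (h * f)) (g - h * f) =
        -(highestWeightComponent w h * highestWeightComponent w f) := by
      rw [map_sub, weightedHomogeneousComponent_eq_zero _ _ hle, zero_sub,
        ← highestWeightComponent_mul]
      rfl
    have hlead : highestWeightComponent w h ∈ J := by
      refine hf _ ?_
      rw [mul_comm, ← neg_mem_iff, ← hcancel]
      exact weightedHomogeneousComponent_mem_of_weightedTotalDegree_le hIJ hi
        (hdeg.trans (max_le hle.le le_rfl))
    obtain ⟨q, hq, hzero | hlt⟩ := exists_mem_sub_eq_zero_or_weightedTotalDegree_lt hJI hlead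
    · have hg : g ∈ I := by
        simpa [sub_eq_zero.1 hzero] using add_mem hi (I.mul_mem_right f hq)
      exact Ideal.mem_sup_left (hIJ g hg)
    · refine ih _ (hn ▸ hlt) ?_ rfl
      simpa [sub_mul, sub_add] using add_mem hi (I.mul_mem_right f hq)

lemma highestWeightComponent_mem_sup_span_singleton
    (hIJ : ∀ g ∈ I, highestWeightComponent w g ∈ J) (hJI : WeightedComponentsLift w J I)
    {f : MvPolynomial σ R} (hf : ∀ g, highestWeightComponent w f * g ∈ J → g ∈ J)
    {g : MvPolynomial σ R} (hg : g ∈ I ⊔ Ideal.span {f}) :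
    highestWeightComponent w g ∈ J ⊔ Ideal.span {highestWeightComponent w f} := by
  obtain ⟨i, hi, _, hh, rfl⟩ := Submodule.mem_sup.1 hg
  obtain ⟨h, rfl⟩ := Ideal.mem_span_singleton'.1 hh
  exact highestWeightComponent_mem_sup_span_singleton_of_sub_mul_mem hIJ hJI hf
    (h := h) (by rwa [add_sub_cancel_right])

open RingTheory.Sequence

lemma highestWeightComponent_mem_ofList {L : List (MvPolynomial σ R)}
    (hL : IsWeaklyRegular (MvPolynomial σ R) (L.map (highestWeightComponent w))) :
    ∀ g ∈ Ideal.ofList L,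
      highestWeightComponent w g ∈ Ideal.ofList (L.map (highestWeightComponent w)) := by
  induction L using List.reverseRecOn with
  | nil =>
    intro g hg
    rw [Ideal.ofList_nil, Ideal.mem_bot] at hg
    rw [hg, highestWeightComponent_zero]
    exact zero_mem _
  | append_singleton L f ih =>
    rw [List.map_append, List.map_singleton, isWeaklyRegular_append_iff,
      isWeaklyRegular_singleton_iff, isSMulRegular_quotient_ideal_smul_top_iff] at hL
    intro g hg
    rw [Ideal.ofList_append, Ideal.ofList_singleton] at hg
    rw [List.map_append, List.map_singleton, Ideal.ofList_append, Ideal.ofList_singleton]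
    exact highestWeightComponent_mem_sup_span_singleton (ih hL.1) (weightedComponentsLift_ofList L)
      hL.2 hg

lemma isWeaklyRegular_of_isWeaklyRegular_map_highestWeightComponent {L : List (MvPolynomial σ R)}
    (hL : IsWeaklyRegular (MvPolynomial σ R) (L.map (highestWeightComponent w))) :
    IsWeaklyRegular (MvPolynomial σ R) L := by
  induction L using List.reverseRecOn with
  | nil => exact .nil _ _
  | append_singleton L f ih =>
    rw [List.map_append, List.map_singleton, isWeaklyRegular_append_iff,
      isWeaklyRegular_singleton_iff, isSMulRegular_quotient_ideal_smul_top_iff] at hL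
    rw [isWeaklyRegular_append_iff, isWeaklyRegular_singleton_iff,
      isSMulRegular_quotient_ideal_smul_top_iff]
    exact ⟨ih hL.1, fun g => mem_of_mul_mem_of_highestWeightComponent
      (highestWeightComponent_mem_ofList hL.1) (weightedComponentsLift_ofList L) hL.2⟩

lemma isRegular_of_isRegular_map_highestWeightComponent {L : List (MvPolynomial σ R)}
    (hL : IsRegular (MvPolynomial σ R) (L.map (highestWeightComponent w))) :
    IsRegular (MvPolynomial σ R) L := by
  rw [isRegular_iff, smul_eq_mul, Ideal.mul_top] at hL ⊢
  refine ⟨isWeaklyRegular_of_isWeaklyRegular_map_highestWeightComponent hL.1, fun htop => hL.2 ?_⟩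
  rw [eq_comm, Ideal.eq_top_iff_one] at htop ⊢
  simpa only [(isWeightedHomogeneous_one (R := R) w).highestWeightComponent_eq] using
    highestWeightComponent_mem_ofList hL.1 1 htop

end MvPolynomial

open MvPolynomial

theorem regular_sequence_of_highest_weight_components_regular_sequence_general
    (K : Type) [Field K]
    (r m : ℕ) (F : Fin m → MvPolynomial (Fin r) K)
    (w : Fin r → ℕ)
    (hreg : RingTheory.Sequence.IsRegular (MvPolynomial (Fin r) K)
        (List.ofFn fun t => MvPolynomial.weightedHomogeneousComponent w
          (MvPolynomial.weightedTotalDegree w (F t)) (F t))) :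
    RingTheory.Sequence.IsRegular (MvPolynomial (Fin r) K) (List.ofFn F) :=
  isRegular_of_isRegular_map_highestWeightComponent (w := w) (by rwa [List.map_ofFn])

/-- If the components of highest weight `F_1^wt, …, F_m^wt` (with respect to a positive
integer weight on each variable) form a regular sequence of `K[A_0, …, A_{r-1}]`, then so
do `F_1, …, F_m`. -/
theorem regular_sequence_of_highest_weight_components_regular_sequence
    (Fq K : Type) [Field Fq] [Fintype Fq] [Field K] [Algebra Fq K] [IsAlgClosure Fq K]
    (r m : ℕ) (F : Fin m → MvPolynomial (Fin r) K) (hF : ∀ t, F t ≠ 0)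
    (w : Fin r → ℕ) (hw : ∀ j, 0 < w j)
    (hreg : RingTheory.Sequence.IsRegular (MvPolynomial (Fin r) K)
        (List.ofFn fun t => MvPolynomial.weightedHomogeneousComponent w
          (MvPolynomial.weightedTotalDegree w (F t)) (F t))) :
    RingTheory.Sequence.IsRegular (MvPolynomial (Fin r) K) (List.ofFn F) :=
  regular_sequence_of_highest_weight_components_regular_sequence_general K r m F w hreg
end
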